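/- arXiv:2407.02717 — 5 statements merged into one kernel-verified Lean document; each statement's English description precedes it below -/
import Mathlib

section
/- For every s > 1 and every x ∈ ℝ, the inverse Fourier transform of the symbol (1+ξ²)^{-s/2} admits the heat-kernel representation: (1/(2π)) ∫_ℝ (1+ξ²)^{-s/2} e^{i x ξ} dξ = (1/(2√π · Γ(s/2))) ∫₀^∞ exp(−t − x²/(4t)) · t^{(s−3)/2} dt, where both integrals converge absolutely. -/
open Real MeasureTheory Set Filter

/-- The Bessel kernel `K_s`. -/
noncomputable def besselKernel (s : ℝ) (x : ℝ) : ℝ :=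
  (1 / (2 * Real.sqrt Real.pi * Real.Gamma (s / 2))) *
    ∫ t in Set.Ioi (0 : ℝ), Real.exp (-t - x ^ 2 / (4 * t)) * t ^ ((s - 3) / 2)

/-- Convolution with the Bessel kernel. -/
noncomputable def convBessel (s : ℝ) (f : ℝ → ℝ) (x : ℝ) : ℝ :=
  ∫ y : ℝ, besselKernel s (x - y) * f y

/-!
Write the symbol as a Laplace integral, `Γ(s/2) (1 + ξ²)^{-s/2} = ∫₀^∞ e^{-(1+ξ²)t} t^{s/2-1} dt`.
After multiplying by `e^{ixξ}` and integrating in `ξ`, the integrals may be exchanged: the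
absolute values integrate in `t` back to `Γ(s/2) (1 + ξ²)^{-s/2}`, which is integrable for `s > 1`.
The inner `ξ`-integral is then the Fourier transform of a Gaussian,
`∫ e^{ixξ} e^{-tξ²} dξ = √(π/t) e^{-x²/(4t)}`.
-/

theorem integral_exp_neg_mul_mul_rpow_sub_one {a p : ℝ} (ha : 0 < a) (hp : 0 < p) :
    ∫ t in Ioi (0 : ℝ), Real.exp (-(a * t)) * t ^ (p - 1) = Real.Gamma p * a ^ (-p) := by
  simp_rw [mul_comm (Real.exp _)]
  rw [Real.integral_rpow_mul_exp_neg_mul_Ioi hp ha, one_div, Real.inv_rpow ha.le,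
    Real.rpow_neg ha.le, mul_comm]

theorem integrableOn_exp_neg_mul_mul_rpow_sub_one {a p : ℝ} (ha : 0 < a) (hp : 0 < p) :
    IntegrableOn (fun t : ℝ => Real.exp (-(a * t)) * t ^ (p - 1)) (Ioi 0) := by
  refine (integrableOn_rpow_mul_exp_neg_mul_rpow (s := p - 1) (by linarith) one_pos ha).congr_fun
    (fun t _ => ?_) measurableSet_Ioi
  simp only [Real.rpow_one, neg_mul]
  ring

theorem integrable_one_add_sq_rpow_neg {s : ℝ} (hs : 1 < s) :
    Integrable (fun ξ : ℝ => (1 + ξ ^ 2) ^ (-(s / 2))) := by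
  refine (integrable_rpow_neg_one_add_norm_sq (E := ℝ) (μ := volume) (r := s)
    (by simpa using hs)).congr (Eventually.of_forall fun ξ => ?_)
  simp [Real.norm_eq_abs, sq_abs, neg_div]

theorem norm_cexp_I_mul_mul (x ξ : ℝ) : ‖Complex.exp (Complex.I * x * ξ)‖ = 1 := by
  rw [mul_assoc, ← Complex.ofReal_mul, Complex.norm_exp_I_mul_ofReal]

theorem integrableOn_exp_neg_sub_sq_div_mul_rpow (x : ℝ) {p : ℝ} (hp : -1 < p) :
    IntegrableOn (fun t : ℝ => Real.exp (-t - x ^ 2 / (4 * t)) * t ^ p) (Ioi 0) := by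
  have hΓ := integrableOn_exp_neg_mul_mul_rpow_sub_one one_pos (show 0 < p + 1 by linarith)
  simp only [one_mul, add_sub_cancel_right] at hΓ
  refine hΓ.mono' (by fun_prop) ?_
  filter_upwards [ae_restrict_mem measurableSet_Ioi] with t (ht : 0 < t)
  have hexp : Real.exp (-t - x ^ 2 / (4 * t)) ≤ Real.exp (-t) :=
    Real.exp_le_exp.2 (sub_le_self _ (by positivity))
  rw [Real.norm_of_nonneg (by positivity)]
  exact mul_le_mul_of_nonneg_right hexp (by positivity)

theorem integral_cexp_I_mul_mul_cexp_neg_mul_sq (x : ℝ) {t : ℝ} (ht : 0 < t) :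
    ∫ ξ : ℝ, Complex.exp (Complex.I * x * ξ) * Complex.exp (-t * ξ ^ 2) =
      ((√π * t ^ (-(1 / 2) : ℝ) * Real.exp (-(x ^ 2 / (4 * t))) : ℝ) : ℂ) := by
  rw [fourierIntegral_gaussian (by simpa using ht)]
  have hsqrt : ((π : ℂ) / t) ^ (1 / 2 : ℂ) = ((√π * t ^ (-(1 / 2) : ℝ) : ℝ) : ℂ) := by
    rw [← Complex.ofReal_div, show (1 / 2 : ℂ) = ((1 / 2 : ℝ) : ℂ) by norm_num,
      ← Complex.ofReal_cpow (by positivity), Real.div_rpow pi_pos.le ht.le, Real.sqrt_eq_rpow,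
      Real.rpow_neg ht.le, div_eq_mul_inv]
  rw [hsqrt]
  push_cast
  ring_nf

section HeatIntegrand

variable {s : ℝ} (x : ℝ)

noncomputable def besselHeatIntegrand (s x ξ t : ℝ) : ℂ :=
  Complex.exp (Complex.I * x * ξ) * ((Real.exp (-((1 + ξ ^ 2) * t)) * t ^ (s / 2 - 1) : ℝ) : ℂ)

theorem norm_besselHeatIntegrand (ξ : ℝ) {t : ℝ} (ht : 0 ≤ t) :
    ‖besselHeatIntegrand s x ξ t‖ = Real.exp (-((1 + ξ ^ 2) * t)) * t ^ (s / 2 - 1) := by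
  rw [besselHeatIntegrand, norm_mul, norm_cexp_I_mul_mul, one_mul, Complex.norm_real,
    Real.norm_of_nonneg (by positivity)]

theorem integral_norm_besselHeatIntegrand (hs : 0 < s) (ξ : ℝ) :
    ∫ t in Ioi (0 : ℝ), ‖besselHeatIntegrand s x ξ t‖ =
      Real.Gamma (s / 2) * (1 + ξ ^ 2) ^ (-(s / 2)) := by
  rw [setIntegral_congr_fun measurableSet_Ioi fun t ht => norm_besselHeatIntegrand x ξ ht.le]
  exact integral_exp_neg_mul_mul_rpow_sub_one (by positivity) (by positivity)

theorem integral_besselHeatIntegrand_Ioi (hs : 0 < s) (ξ : ℝ) :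
    ∫ t in Ioi (0 : ℝ), besselHeatIntegrand s x ξ t =
      Real.Gamma (s / 2) *
        ((((1 + ξ ^ 2) ^ (-(s / 2)) : ℝ) : ℂ) * Complex.exp (Complex.I * x * ξ)) := by
  unfold besselHeatIntegrand
  rw [integral_const_mul, integral_complex_ofReal,
    integral_exp_neg_mul_mul_rpow_sub_one (by positivity) (by positivity)]
  push_cast
  ring

theorem integral_besselHeatIntegrand {t : ℝ} (ht : 0 < t) :
    ∫ ξ : ℝ, besselHeatIntegrand s x ξ t =
      ((√π * (Real.exp (-t - x ^ 2 / (4 * t)) * t ^ ((s - 3) / 2)) : ℝ) : ℂ) := by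
  have hsplit : ∀ ξ : ℝ, besselHeatIntegrand s x ξ t =
      ((Real.exp (-t) * t ^ (s / 2 - 1) : ℝ) : ℂ) *
        (Complex.exp (Complex.I * x * ξ) * Complex.exp (-t * ξ ^ 2)) := by
    intro ξ
    rw [besselHeatIntegrand, show -((1 + ξ ^ 2) * t) = -t + -t * ξ ^ 2 by ring, Real.exp_add]
    push_cast
    ring
  simp_rw [hsplit]
  rw [integral_const_mul, integral_cexp_I_mul_mul_cexp_neg_mul_sq x ht, ← Complex.ofReal_mul]
  congr 1
  have hpow : t ^ ((s - 3) / 2) = t ^ (s / 2 - 1) * t ^ (-(1 / 2) : ℝ) := by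
    rw [← Real.rpow_add ht]; ring_nf
  rw [hpow, show -t - x ^ 2 / (4 * t) = -t + -(x ^ 2 / (4 * t)) by ring, Real.exp_add]
  ring

theorem integrable_besselHeatIntegrand (hs : 1 < s) :
    Integrable (Function.uncurry (besselHeatIntegrand s x))
      (volume.prod (volume.restrict (Ioi 0))) := by
  rw [integrable_prod_iff (by unfold besselHeatIntegrand; fun_prop)]
  refine ⟨Eventually.of_forall fun ξ => ?_, ?_⟩
  · refine Integrable.congr' (integrableOn_exp_neg_mul_mul_rpow_sub_one
      (by positivity : 0 < 1 + ξ ^ 2) (by linarith : 0 < s / 2))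
      (by unfold besselHeatIntegrand; fun_prop) ?_
    filter_upwards [ae_restrict_mem measurableSet_Ioi] with t (ht : 0 < t)
    rw [Function.uncurry_apply_pair, norm_besselHeatIntegrand x ξ ht.le,
      Real.norm_of_nonneg (by positivity)]
  · simp only [Function.uncurry_apply_pair,
      integral_norm_besselHeatIntegrand x (by linarith : 0 < s)]
    exact (integrable_one_add_sq_rpow_neg hs).const_mul _

end HeatIntegrand

/-- heat-kernel representation of the inverse Fourier transform of
`(1+ξ²)^{-s/2}` for `s > 1`, with absolute convergence of both integrals. -/
theorem besselKernel_heat_representation (s : ℝ) (hs : 1 < s) (x : ℝ) :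
    Integrable (fun ξ : ℝ => ((1 + ξ ^ 2) ^ (-(s / 2)) : ℝ)) ∧
    Integrable
      (fun ξ : ℝ => (((1 + ξ ^ 2) ^ (-(s / 2)) : ℝ) : ℂ) * Complex.exp (Complex.I * x * ξ)) ∧
    IntegrableOn (fun t : ℝ => Real.exp (-t - x ^ 2 / (4 * t)) * t ^ ((s - 3) / 2))
      (Set.Ioi (0 : ℝ)) ∧
    ((1 / (2 * Real.pi) : ℝ) : ℂ) *
        ∫ ξ : ℝ, (((1 + ξ ^ 2) ^ (-(s / 2)) : ℝ) : ℂ) * Complex.exp (Complex.I * x * ξ) =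
      (((1 / (2 * Real.sqrt Real.pi * Real.Gamma (s / 2))) *
        ∫ t in Set.Ioi (0 : ℝ), Real.exp (-t - x ^ 2 / (4 * t)) * t ^ ((s - 3) / 2) : ℝ) : ℂ) := by
  have hsymbol := integrable_one_add_sq_rpow_neg hs
  refine ⟨hsymbol, hsymbol.ofReal.mul_bdd (by fun_prop)
    (Eventually.of_forall fun ξ => (norm_cexp_I_mul_mul x ξ).le),
    integrableOn_exp_neg_sub_sq_div_mul_rpow x (by linarith), ?_⟩
  set I := ∫ ξ : ℝ, (((1 + ξ ^ 2) ^ (-(s / 2)) : ℝ) : ℂ) * Complex.exp (Complex.I * x * ξ)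
  set J := ∫ t in Ioi (0 : ℝ), Real.exp (-t - x ^ 2 / (4 * t)) * t ^ ((s - 3) / 2)
  have hswap : (Real.Gamma (s / 2) : ℂ) * I = ((√π * J : ℝ) : ℂ) :=
    calc _ = ∫ ξ : ℝ, ∫ t in Ioi (0 : ℝ), besselHeatIntegrand s x ξ t := by
          simp only [I, integral_besselHeatIntegrand_Ioi x (by linarith : 0 < s),
            integral_const_mul]
      _ = ∫ t in Ioi (0 : ℝ), ∫ ξ : ℝ, besselHeatIntegrand s x ξ t :=
          integral_integral_swap (integrable_besselHeatIntegrand x hs)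
      _ = ((√π * J : ℝ) : ℂ) := by
          rw [setIntegral_congr_fun measurableSet_Ioi fun t ht => integral_besselHeatIntegrand x ht,
            integral_complex_ofReal, integral_const_mul]
  have hΓ : (Real.Gamma (s / 2) : ℂ) ≠ 0 := by
    exact_mod_cast (Real.Gamma_pos_of_pos (by linarith : 0 < s / 2)).ne'
  have hsqrtπ : (√π : ℂ) ≠ 0 := by exact_mod_cast (Real.sqrt_pos.2 pi_pos).ne'
  have hπ : ((√π : ℝ) : ℂ) * √π = π := by exact_mod_cast Real.mul_self_sqrt pi_pos.le
  push_cast at hswap ⊢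
  field_simp
  linear_combination (√π : ℂ) * hswap + (J : ℂ) * hπ
end

section
/- For every s > 0, the Bessel kernel K_s is integrable on ℝ and ∫_ℝ K_s(x) dx = 1. -/
open Real MeasureTheory Set Filter

/-!
For `t > 0` the Gaussian integral gives `∫ₓ e^{-t - x²/(4t)} t^a dx = 2√π e^{-t} t^{a+1/2}`, which for
`a > -3/2` is integrable on `t > 0` with integral `2√π Γ(a + 3/2)`. The integrand being nonnegative,
Tonelli makes it integrable on `(0, ∞) × ℝ` and Fubini swaps the two integrals. For `a = (s-3)/2` the
total mass `2√π Γ(s/2)` is exactly the reciprocal of the constant in front of `K_s`.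
-/

lemma exp_neg_sub_sq_div_eq_mul (x : ℝ) {t : ℝ} (ht : t ≠ 0) :
    exp (-t - x ^ 2 / (4 * t)) = exp (-t) * exp (-(4 * t)⁻¹ * x ^ 2) := by
  rw [← exp_add]
  congr 1
  field_simp
  ring

lemma integrable_exp_neg_sub_sq_div_mul_rpow (a : ℝ) {t : ℝ} (ht : 0 < t) :
    Integrable fun x : ℝ => exp (-t - x ^ 2 / (4 * t)) * t ^ a := by
  simp_rw [exp_neg_sub_sq_div_eq_mul _ ht.ne']
  exact ((integrable_exp_neg_mul_sq (by positivity)).const_mul _).mul_const _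

lemma integral_exp_neg_sub_sq_div_mul_rpow (a : ℝ) {t : ℝ} (ht : 0 < t) :
    ∫ x : ℝ, exp (-t - x ^ 2 / (4 * t)) * t ^ a = 2 * √π * (exp (-t) * t ^ (a + 1 / 2)) := by
  have hsqrt : √(π / (4 * t)⁻¹) = 2 * √π * t ^ (1 / 2 : ℝ) := by
    rw [div_inv_eq_mul, show π * (4 * t) = 2 ^ 2 * π * t by ring, sqrt_mul (by positivity),
      sqrt_mul (by positivity), sqrt_sq zero_le_two, sqrt_eq_rpow t]
  simp_rw [exp_neg_sub_sq_div_eq_mul _ ht.ne']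
  rw [integral_mul_const, integral_const_mul, integral_gaussian, hsqrt, rpow_add ht]
  ring

lemma integrable_prod_exp_neg_sub_sq_div_mul_rpow {a : ℝ} (ha : -3 / 2 < a) :
    Integrable (Function.uncurry fun t x : ℝ => exp (-t - x ^ 2 / (4 * t)) * t ^ a)
      ((volume.restrict (Ioi 0)).prod volume) := by
  refine (integrable_prod_iff (by unfold Function.uncurry; fun_prop)).2 ⟨?_, ?_⟩
  · exact (ae_restrict_iff' measurableSet_Ioi).2 <| .of_forall fun t ht =>
      integrable_exp_neg_sub_sq_div_mul_rpow a ht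
  · refine IntegrableOn.congr_fun
      ((GammaIntegral_convergent (by linarith : 0 < a + 3 / 2)).const_mul (2 * √π))
      (fun t (ht : 0 < t) => ?_) measurableSet_Ioi
    have hnonneg (x : ℝ) : 0 ≤ exp (-t - x ^ 2 / (4 * t)) * t ^ a := by positivity
    simp only [Function.uncurry_apply_pair, norm_of_nonneg, hnonneg]
    rw [integral_exp_neg_sub_sq_div_mul_rpow a ht, show a + 3 / 2 - 1 = a + 1 / 2 by ring]

lemma integral_integral_exp_neg_sub_sq_div_mul_rpow {a : ℝ} (ha : -3 / 2 < a) :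
    ∫ x : ℝ, ∫ t in Ioi 0, exp (-t - x ^ 2 / (4 * t)) * t ^ a = 2 * √π * Gamma (a + 3 / 2) := by
  rw [← integral_integral_swap (integrable_prod_exp_neg_sub_sq_div_mul_rpow ha),
    setIntegral_congr_fun measurableSet_Ioi fun t ht => integral_exp_neg_sub_sq_div_mul_rpow a ht,
    integral_const_mul, Gamma_eq_integral (by linarith), show a + 3 / 2 - 1 = a + 1 / 2 by ring]

/-- for `s > 0`, the Bessel kernel is integrable with total mass one. -/
theorem besselKernel_integrable_integral_one (s : ℝ) (hs : 0 < s) :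
    Integrable (besselKernel s) ∧ (∫ x : ℝ, besselKernel s x) = 1 := by
  have ha : -3 / 2 < (s - 3) / 2 := by linarith
  have hΓ : 0 < Gamma (s / 2) := Gamma_pos_of_pos (half_pos hs)
  have hπ : 0 < √π := sqrt_pos.2 pi_pos
  refine ⟨(integrable_prod_exp_neg_sub_sq_div_mul_rpow ha).integral_prod_right.const_mul _, ?_⟩
  unfold besselKernel
  rw [integral_const_mul, integral_integral_exp_neg_sub_sq_div_mul_rpow ha,
    show (s - 3) / 2 + 3 / 2 = s / 2 by ring]
  field_simp
end

section
/- For every s ∈ (0,1) there exist δ ∈ (0,1] and constants c₁, c₂ > 0 such that c₁ · |x|^{s−1} ≤ K_s(x) ≤ c₂ · |x|^{s−1} for all x with 0 < |x| ≤ δ; in particular K_s(x) → ∞ as x → 0. -/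
/-!
Write `a = x² / 4` and `p = (s - 1) / 2 < 0`, so that the integral defining `K_s(x)` is
`∫₀^∞ e^{-t - a/t} t^{p-1} dt`. Dropping `e^{-t}` and substituting `t ↦ 1/t` bounds it above
by `∫₀^∞ e^{-a/t} t^{p-1} dt = Γ(-p) a^p`. For `a ≤ 1/4` the integrand is at least
`e^{-3/2} (2a)^{p-1}` on `(a, 2a]`, which bounds the integral below by a multiple of `a^p`.
Since `a^p` is a constant multiple of `|x|^{s-1}`, both estimates follow, and `|x|^{s-1} → ∞`.
-/

open Real MeasureTheory Set Filter

section ExpNegDiv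

variable {a p : ℝ}

theorem integral_exp_neg_div_mul_rpow (ha : 0 < a) (hp : p < 0) :
    ∫ t in Ioi 0, exp (-(a / t)) * t ^ (p - 1) = a ^ p * Gamma (-p) := by
  have key := integral_comp_rpow_Ioi (fun u => u ^ (-p - 1) * exp (-(a * u)))
    (neg_ne_zero.2 one_ne_zero)
  rw [integral_rpow_mul_exp_neg_mul_Ioi (neg_pos.2 hp) ha, one_div, inv_rpow ha.le,
    ← rpow_neg ha.le, neg_neg] at key
  rw [← key]
  refine setIntegral_congr_fun measurableSet_Ioi fun t (ht : 0 < t) => ?_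
  simp only [smul_eq_mul, abs_neg, abs_one, one_mul, rpow_neg_one, inv_rpow ht.le,
    ← rpow_neg ht.le, div_eq_mul_inv]
  rw [← mul_assoc, ← rpow_add ht, mul_comm]
  ring_nf

theorem integrableOn_exp_neg_div_mul_rpow (ha : 0 < a) (hp : p < 0) :
    IntegrableOn (fun t => exp (-(a / t)) * t ^ (p - 1)) (Ioi 0) :=
  Integrable.of_integral_ne_zero <| by
    rw [integral_exp_neg_div_mul_rpow ha hp]
    have := Gamma_pos_of_pos (neg_pos.2 hp)
    positivity

theorem exp_neg_sub_div_mul_rpow_le {t : ℝ} (ht : 0 < t) :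
    exp (-t - a / t) * t ^ p ≤ exp (-(a / t)) * t ^ p := by
  gcongr
  linarith

theorem integrableOn_exp_neg_sub_div_mul_rpow (ha : 0 < a) (hp : p < 0) :
    IntegrableOn (fun t => exp (-t - a / t) * t ^ (p - 1)) (Ioi 0) := by
  refine (integrableOn_exp_neg_div_mul_rpow ha hp).mono' (by fun_prop) ?_
  filter_upwards [ae_restrict_mem measurableSet_Ioi] with t (ht : 0 < t)
  rw [norm_of_nonneg (by positivity)]
  exact exp_neg_sub_div_mul_rpow_le ht

theorem integral_exp_neg_sub_div_mul_rpow_le (ha : 0 < a) (hp : p < 0) :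
    ∫ t in Ioi 0, exp (-t - a / t) * t ^ (p - 1) ≤ a ^ p * Gamma (-p) := by
  rw [← integral_exp_neg_div_mul_rpow ha hp]
  exact setIntegral_mono_on (integrableOn_exp_neg_sub_div_mul_rpow ha hp)
    (integrableOn_exp_neg_div_mul_rpow ha hp) measurableSet_Ioi
    fun t ht => exp_neg_sub_div_mul_rpow_le ht

theorem le_integral_exp_neg_sub_div_mul_rpow (ha : 0 < a) (ha4 : a ≤ 1 / 4) (hp : p < 0) :
    exp (-(3 / 2)) * 2 ^ (p - 1) * a ^ p ≤ ∫ t in Ioi 0, exp (-t - a / t) * t ^ (p - 1) := by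
  have hwindow : ∀ t ∈ Ioc a (2 * a), exp (-(3 / 2)) * (2 * a) ^ (p - 1) ≤
      exp (-t - a / t) * t ^ (p - 1) := by
    rintro t ⟨hat, ht2a⟩
    have ht : 0 < t := ha.trans hat
    have hdiv : a / t ≤ 1 := (div_le_one ht).2 hat.le
    exact mul_le_mul (exp_le_exp.2 (by linarith)) (rpow_le_rpow_of_nonpos ht ht2a (by linarith))
      (by positivity) (by positivity)
  calc exp (-(3 / 2)) * 2 ^ (p - 1) * a ^ p
      = ∫ _ in Ioc a (2 * a), exp (-(3 / 2)) * (2 * a) ^ (p - 1) := by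
        rw [setIntegral_const, volume_real_Ioc_of_le (by linarith), smul_eq_mul,
          mul_rpow zero_le_two ha.le, rpow_sub_one ha.ne']
        field_simp
        ring
    _ ≤ ∫ t in Ioc a (2 * a), exp (-t - a / t) * t ^ (p - 1) :=
        setIntegral_mono_on (integrableOn_const (by simp))
          ((integrableOn_exp_neg_sub_div_mul_rpow ha hp).mono_set fun t ht => ha.trans ht.1)
          measurableSet_Ioc hwindow
    _ ≤ ∫ t in Ioi 0, exp (-t - a / t) * t ^ (p - 1) :=
        setIntegral_mono_set (integrableOn_exp_neg_sub_div_mul_rpow ha hp)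
          ((ae_restrict_mem measurableSet_Ioi).mono fun t (ht : 0 < t) => by positivity)
          (LE.le.eventuallyLE fun t ht => ha.trans ht.1)

end ExpNegDiv

theorem besselKernel_eq (s x : ℝ) :
    besselKernel s x = 1 / (2 * √π * Gamma (s / 2)) *
      ∫ t in Ioi 0, exp (-t - x ^ 2 / 4 / t) * t ^ ((s - 1) / 2 - 1) := by
  unfold besselKernel
  congr 2 with t
  rw [div_div]
  ring_nf

theorem sq_div_four_rpow_half (x r : ℝ) : (x ^ 2 / 4) ^ (r / 2) = |x| ^ r / 2 ^ r := by
  rw [show x ^ 2 / 4 = (|x| / 2) ^ (2 : ℝ) by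
      rw [div_rpow (abs_nonneg x) zero_le_two]; norm_num,
    ← rpow_mul (by positivity), mul_div_cancel₀ r two_ne_zero,
    div_rpow (abs_nonneg x) zero_le_two]

section BesselKernel

variable {s : ℝ}

theorem exists_pos_besselKernel_le (hs0 : 0 < s) (hs1 : s < 1) :
    ∃ c > 0, ∀ x ≠ 0, besselKernel s x ≤ c * |x| ^ (s - 1) := by
  have hΓs := Gamma_pos_of_pos (half_pos hs0)
  have hΓp := Gamma_pos_of_pos (neg_pos.2 (by linarith : (s - 1) / 2 < 0))
  refine ⟨1 / (2 * √π * Gamma (s / 2)) * Gamma (-((s - 1) / 2)) / 2 ^ (s - 1),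
    by positivity, fun x hx => ?_⟩
  rw [besselKernel_eq]
  calc _ ≤ 1 / (2 * √π * Gamma (s / 2)) *
        ((x ^ 2 / 4) ^ ((s - 1) / 2) * Gamma (-((s - 1) / 2))) :=
        mul_le_mul_of_nonneg_left
          (integral_exp_neg_sub_div_mul_rpow_le (by positivity) (by linarith)) (by positivity)
    _ = _ := by rw [sq_div_four_rpow_half]; ring

theorem exists_pos_le_besselKernel (hs0 : 0 < s) (hs1 : s < 1) :
    ∃ c > 0, ∀ x ≠ 0, |x| ≤ 1 → c * |x| ^ (s - 1) ≤ besselKernel s x := by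
  have hΓs := Gamma_pos_of_pos (half_pos hs0)
  refine ⟨1 / (2 * √π * Gamma (s / 2)) * (exp (-(3 / 2)) * 2 ^ ((s - 1) / 2 - 1)) /
    2 ^ (s - 1), by positivity, fun x hx hx1 => ?_⟩
  have ha4 : x ^ 2 / 4 ≤ 1 / 4 := by nlinarith [sq_abs x, abs_nonneg x]
  rw [besselKernel_eq]
  calc _ = 1 / (2 * √π * Gamma (s / 2)) *
        (exp (-(3 / 2)) * 2 ^ ((s - 1) / 2 - 1) * (x ^ 2 / 4) ^ ((s - 1) / 2)) := by
        rw [sq_div_four_rpow_half]; ring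
    _ ≤ _ := mul_le_mul_of_nonneg_left
        (le_integral_exp_neg_sub_div_mul_rpow (by positivity) ha4 (by linarith)) (by positivity)

end BesselKernel

/-- for `s ∈ (0,1)` the Bessel kernel behaves like `|x|^{s-1}` near the origin;
in particular it blows up at the origin. -/
theorem besselKernel_singularity_small_s (s : ℝ) (hs0 : 0 < s) (hs1 : s < 1) :
    (∃ δ : ℝ, 0 < δ ∧ δ ≤ 1 ∧ ∃ c₁ c₂ : ℝ, 0 < c₁ ∧ 0 < c₂ ∧
      ∀ x : ℝ, 0 < |x| → |x| ≤ δ →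
        c₁ * |x| ^ (s - 1) ≤ besselKernel s x ∧ besselKernel s x ≤ c₂ * |x| ^ (s - 1)) ∧
    Tendsto (besselKernel s) (nhdsWithin 0 {(0 : ℝ)}ᶜ) atTop := by
  obtain ⟨c₁, hc₁, hlower⟩ := exists_pos_le_besselKernel hs0 hs1
  obtain ⟨c₂, hc₂, hupper⟩ := exists_pos_besselKernel_le hs0 hs1
  refine ⟨⟨1, one_pos, le_rfl, c₁, c₂, hc₁, hc₂, fun x hx0 hx1 =>
    ⟨hlower x (abs_pos.1 hx0) hx1, hupper x (abs_pos.1 hx0)⟩⟩, ?_⟩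
  have hpow : Tendsto (fun x : ℝ => c₁ * |x| ^ (s - 1)) (nhdsWithin 0 {0}ᶜ) atTop :=
    ((tendsto_rpow_neg_nhdsGT_zero (by linarith)).comp tendsto_abs_nhdsNE_zero).const_mul_atTop
      hc₁
  refine tendsto_atTop_mono' _ ?_ hpow
  filter_upwards [self_mem_nhdsWithin,
    nhdsWithin_le_nhds (Metric.closedBall_mem_nhds (0 : ℝ) one_pos)] with x hx hx1
  exact hlower x hx (by simpa using hx1)
end

section
/- For s = 1, the Bessel kernel has a logarithmic singularity at the origin: lim_{x → 0⁺} K_1(x) / log(1/x) = 1/π. -/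
/-!
Since `Γ(1/2) = √π`, `π K₁(x) = ½ ∫₀^∞ exp(-t - a²/t) dt/t` with `a = x/2`. The factor
`exp(-t - a²/t)` is invariant under `t ↦ a²/t`, which preserves `dt/t`, so the integrals over
`(0, a]` and `(a, ∞)` agree and `π K₁(x) = ∫_a^∞ exp(-t - a²/t) dt/t`. On `(a, 1]` the integrand
lies between `1/t - 2` and `1/t`, and over `(1, ∞)` it is at most `exp(-t)`; hence
`π K₁(x) = log(1/x) + O(1)`, and dividing by `log(1/x) → ∞` gives the limit.
-/

open Real MeasureTheory Set Filter

open Asymptotics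

theorem image_sq_div_Ioi {a : ℝ} (ha : 0 < a) : (fun t => a ^ 2 / t) '' Ioi a = Ioo 0 a := by
  ext u
  constructor
  · rintro ⟨t, ht, rfl⟩
    have ht0 : 0 < t := ha.trans ht
    refine ⟨by positivity, (div_lt_iff₀ ht0).2 ?_⟩
    nlinarith [mem_Ioi.1 ht]
  · rintro ⟨hu0, hua⟩
    refine ⟨a ^ 2 / u, (lt_div_iff₀ hu0).2 (by nlinarith), ?_⟩
    field_simp

theorem integral_Ioc_div_self_eq_integral_Ioi_of_symm {f : ℝ → ℝ} {a : ℝ} (ha : 0 < a)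
    (hf : ∀ t, 0 < t → f (a ^ 2 / t) = f t) :
    ∫ t in Ioc 0 a, f t / t = ∫ t in Ioi a, f t / t := by
  have hderiv : ∀ t ∈ Ioi a, HasDerivWithinAt (fun t => a ^ 2 / t) (-(a ^ 2) / t ^ 2) (Ioi a) t :=
    fun t ht => by
      have ht0 : t ≠ 0 := (ha.trans ht).ne'
      simpa [div_eq_mul_inv] using ((hasDerivAt_inv ht0).const_mul (a ^ 2)).hasDerivWithinAt
  have hinj : InjOn (fun t => a ^ 2 / t) (Ioi a) := fun s _ t _ hst => by
    simpa [div_eq_mul_inv, ha.ne'] using hst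
  rw [integral_Ioc_eq_integral_Ioo, ← image_sq_div_Ioi ha,
    integral_image_eq_integral_abs_deriv_smul measurableSet_Ioi hderiv hinj]
  refine setIntegral_congr_fun measurableSet_Ioi fun t ht => ?_
  have ht0 : 0 < t := ha.trans ht
  rw [hf t ht0, abs_of_nonpos (by rw [neg_div]; exact neg_nonpos.2 (by positivity)), smul_eq_mul]
  field_simp

theorem integral_Ioi_div_self_eq_two_mul_of_symm {f : ℝ → ℝ} {a : ℝ} (ha : 0 < a)
    (hf : ∀ t, 0 < t → f (a ^ 2 / t) = f t) (hint : IntegrableOn (fun t => f t / t) (Ioi 0)) :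
    ∫ t in Ioi 0, f t / t = 2 * ∫ t in Ioi a, f t / t := by
  rw [← Ioc_union_Ioi_eq_Ioi ha.le, setIntegral_union (Ioc_disjoint_Ioi le_rfl) measurableSet_Ioi
    (hint.mono_set Ioc_subset_Ioi_self) (hint.mono_set (Ioi_subset_Ioi ha.le)),
    integral_Ioc_div_self_eq_integral_Ioi_of_symm ha hf]
  ring

theorem integrableOn_exp_neg_sub_div_div_self {c : ℝ} (hc : 0 < c) :
    IntegrableOn (fun t => exp (-t - c / t) / t) (Ioi 0) := by
  have hcont : ContinuousOn (fun t => exp (-t - c / t) / t) (Ioi 0) :=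
    fun t ht => by
      have ht0 : t ≠ 0 := (mem_Ioi.1 ht).ne'
      fun_prop (disch := exact ht0)
  refine ((exp_neg_integrableOn_Ioi 0 one_pos).const_mul c⁻¹).mono'
    (hcont.aestronglyMeasurable measurableSet_Ioi) ?_
  filter_upwards [ae_restrict_mem measurableSet_Ioi] with t (ht : 0 < t)
  have hct : c ≤ t * exp (c / t) := by
    have := add_one_le_exp (c / t)
    rw [← div_le_iff₀' ht]
    linarith
  rw [norm_of_nonneg (by positivity), neg_one_mul, sub_eq_add_neg, exp_add, exp_neg (c / t),
    div_le_iff₀ ht]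
  calc exp (-t) * (exp (c / t))⁻¹ = exp (-t) * (t * exp (c / t))⁻¹ * t := by field_simp
    _ ≤ c⁻¹ * exp (-t) * t := by
        rw [mul_comm c⁻¹]
        gcongr

theorem besselKernel_one_eq (x : ℝ) :
    besselKernel 1 x = (2 * π)⁻¹ * ∫ t in Ioi 0, exp (-t - (x / 2) ^ 2 / t) / t := by
  rw [besselKernel, Gamma_one_half_eq, mul_assoc, mul_self_sqrt pi_pos.le, one_div]
  congr 1
  refine setIntegral_congr_fun measurableSet_Ioi fun t _ => ?_
  rw [show ((1 : ℝ) - 3) / 2 = -1 by norm_num, rpow_neg_one, ← div_eq_mul_inv, div_pow, div_div]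
  norm_num

theorem pi_mul_besselKernel_one {x : ℝ} (hx : 0 < x) :
    π * besselKernel 1 x = ∫ t in Ioi (x / 2), exp (-t - (x / 2) ^ 2 / t) / t := by
  have hsymm : ∀ t, 0 < t → exp (-((x / 2) ^ 2 / t) - (x / 2) ^ 2 / ((x / 2) ^ 2 / t)) =
      exp (-t - (x / 2) ^ 2 / t) := fun t ht => by
    congr 1
    field_simp
    ring
  rw [besselKernel_one_eq, integral_Ioi_div_self_eq_two_mul_of_symm (half_pos hx) hsymm
    (integrableOn_exp_neg_sub_div_div_self (by positivity))]
  field_simp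

section Bounds

variable {a : ℝ}

theorem integral_Ioi_exp_neg_sub_sq_div_div_self_le (ha : 0 < a) (ha1 : a ≤ 1) :
    ∫ t in Ioi a, exp (-t - a ^ 2 / t) / t ≤ -log a + 1 := by
  have hint := integrableOn_exp_neg_sub_div_div_self (pow_pos ha 2)
  have hexp_le : ∀ t, 0 < t → exp (-t - a ^ 2 / t) ≤ exp (-t) := fun t ht =>
    exp_le_exp.2 (by linarith [div_pos (pow_pos ha 2) ht])
  have hnear : ∫ t in Ioc a 1, exp (-t - a ^ 2 / t) / t ≤ ∫ t in Ioc a 1, t⁻¹ := by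
    refine setIntegral_mono_on (hint.mono_set fun t ht => ha.trans ht.1) ?_ measurableSet_Ioc
      fun t ht => ?_
    · exact (continuousOn_inv₀.mono fun t ht => (ha.trans_le ht.1).ne').integrableOn_Icc.mono_set
        Ioc_subset_Icc_self
    · have ht0 : 0 < t := ha.trans ht.1
      rw [div_eq_mul_inv]
      refine mul_le_of_le_one_left (by positivity) ((hexp_le t ht0).trans ?_)
      exact exp_le_one_iff.2 (by linarith)
  have hfar : ∫ t in Ioi 1, exp (-t - a ^ 2 / t) / t ≤ ∫ t in Ioi 1, exp (-t) := by
    refine setIntegral_mono_on (hint.mono_set (Ioi_subset_Ioi zero_le_one))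
      (by simpa using exp_neg_integrableOn_Ioi 1 one_pos) measurableSet_Ioi fun t ht => ?_
    have ht1 : 1 ≤ t := (mem_Ioi.1 ht).le
    exact (div_le_self (exp_pos _).le ht1).trans (hexp_le t (by linarith))
  rw [← Ioc_union_Ioi_eq_Ioi ha1, setIntegral_union (Ioc_disjoint_Ioi le_rfl) measurableSet_Ioi
    (hint.mono_set fun t ht => ha.trans ht.1) (hint.mono_set (Ioi_subset_Ioi zero_le_one))]
  have hinv : ∫ t in Ioc a 1, t⁻¹ = -log a := by
    rw [← intervalIntegral.integral_of_le ha1, integral_inv_of_pos ha one_pos, one_div, log_inv]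
  rw [integral_exp_neg_Ioi] at hfar
  have : exp (-1) ≤ 1 := exp_le_one_iff.2 (by norm_num)
  linarith

theorem neg_log_sub_two_le_integral_Ioi_exp_neg_sub_sq_div_div_self (ha : 0 < a) (ha1 : a ≤ 1) :
    -log a - 2 ≤ ∫ t in Ioi a, exp (-t - a ^ 2 / t) / t := by
  have hint := integrableOn_exp_neg_sub_div_div_self (pow_pos ha 2)
  have hinv : ContinuousOn (fun t : ℝ => t⁻¹) (Icc a 1) :=
    continuousOn_inv₀.mono fun t ht => (ha.trans_le ht.1).ne'
  have hcont : ContinuousOn (fun t : ℝ => t⁻¹ - 2) (Icc a 1) := hinv.sub continuousOn_const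
  have hnear : ∫ t in Ioc a 1, (t⁻¹ - 2) ≤ ∫ t in Ioc a 1, exp (-t - a ^ 2 / t) / t := by
    refine setIntegral_mono_on (hcont.integrableOn_Icc.mono_set Ioc_subset_Icc_self)
      (hint.mono_set fun t ht => ha.trans ht.1) measurableSet_Ioc fun t ht => ?_
    have ht0 : 0 < t := ha.trans ht.1
    have hsq : a ^ 2 / t ≤ t := (div_le_iff₀ ht0).2 (by nlinarith [ht.1])
    have := add_one_le_exp (-t - a ^ 2 / t)
    rw [le_div_iff₀ ht0, sub_mul, inv_mul_cancel₀ ht0.ne']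
    linarith
  have hval : ∫ t in Ioc a 1, (t⁻¹ - 2) = -log a - 2 * (1 - a) := by
    rw [← intervalIntegral.integral_of_le ha1, intervalIntegral.integral_sub
      (hinv.intervalIntegrable_of_Icc ha1) intervalIntegrable_const, integral_inv_of_pos ha one_pos,
      one_div, log_inv, intervalIntegral.integral_const, smul_eq_mul]
    ring
  have hfar : ∫ t in Ioc a 1, exp (-t - a ^ 2 / t) / t ≤ ∫ t in Ioi a, exp (-t - a ^ 2 / t) / t :=
    setIntegral_mono_set (hint.mono_set (Ioi_subset_Ioi ha.le))
      (ae_restrict_of_forall_mem measurableSet_Ioi fun t (ht : a < t) =>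
        div_nonneg (exp_pos _).le (ha.trans ht).le)
      Ioc_subset_Ioi_self.eventuallyLE
  linarith

end Bounds

theorem abs_pi_mul_besselKernel_one_sub_log_le {x : ℝ} (hx : 0 < x) (hx2 : x ≤ 2) :
    |π * besselKernel 1 x - log (1 / x)| ≤ 3 := by
  have hlower := neg_log_sub_two_le_integral_Ioi_exp_neg_sub_sq_div_div_self (half_pos hx)
    (by linarith)
  have hupper := integral_Ioi_exp_neg_sub_sq_div_div_self_le (half_pos hx) (by linarith)
  rw [log_div hx.ne' two_ne_zero] at hlower hupper
  rw [pi_mul_besselKernel_one hx, one_div, log_inv, abs_le]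
  have := log_pos one_lt_two
  have := log_two_lt_d9
  constructor <;> linarith

theorem Asymptotics.IsBigO.isEquivalent_of_tendsto_norm_atTop {α E : Type*}
    [NormedAddCommGroup E] {l : Filter α} {u v : α → E} (huv : (u - v) =O[l] fun _ => (1 : ℝ))
    (hv : Tendsto (fun x => ‖v x‖) l atTop) : u ~[l] v :=
  huv.trans_isLittleO ((isLittleO_one_left_iff ℝ).2 hv)

/-- for `s = 1` the Bessel kernel has a logarithmic singularity at the origin:
`K_1(x) / log(1/x) → 1/π` as `x → 0⁺`. -/
theorem besselKernel_log_singularity :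
    Tendsto (fun x : ℝ => besselKernel 1 x / Real.log (1 / x))
      (nhdsWithin 0 (Set.Ioi (0 : ℝ))) (nhds (1 / Real.pi)) := by
  have hlog : Tendsto (fun x : ℝ => log (1 / x)) (nhdsWithin 0 (Ioi 0)) atTop := by
    simpa only [one_div, log_inv, Function.comp_def] using
      tendsto_neg_atBot_atTop.comp tendsto_log_nhdsGT_zero
  have hbounded : (fun x => π * besselKernel 1 x - log (1 / x)) =O[nhdsWithin 0 (Ioi 0)]
      fun _ => (1 : ℝ) :=
    IsBigO.of_bound 3 <| by
      filter_upwards [Ioo_mem_nhdsGT two_pos] with x hx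
      simpa using abs_pi_mul_besselKernel_one_sub_log_le hx.1 hx.2.le
  have hequiv : (fun x => π * besselKernel 1 x) ~[nhdsWithin 0 (Ioi 0)] fun x => log (1 / x) :=
    hbounded.isEquivalent_of_tendsto_norm_atTop (tendsto_norm_atTop_atTop.comp hlog)
  have hratio := ((isEquivalent_iff_tendsto_one (hlog.eventually_ne_atTop 0)).1 hequiv).const_mul
    π⁻¹
  rw [mul_one, ← one_div] at hratio
  refine hratio.congr fun x => ?_
  simp only [Pi.div_apply]
  field_simp
end

section
/- Let s > 0, μ ∈ ℝ, and let φ : ℝ → ℝ be a bounded continuous solution of the steady fKdV equation with speed μ satisfying φ(x) ≤ μ/2 for all x. Then for all x, y ∈ ℝ, (φ(x) − φ(y))² ≤ |(K_s ∗ φ)(x) − (K_s ∗ φ)(y)|. -/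
open Real MeasureTheory Set Filter

/-!
Writing the steady equation as `(μ/2 - φ)² = μ²/4 - K_s ∗ φ`, the difference of the
convolutions at `x` and `y` is a difference of squares `a² - b²` of the nonnegative numbers
`a = μ/2 - φ y`, `b = μ/2 - φ x`, and `(a - b)² ≤ |a - b| (a + b) = |a² - b²|` for `a, b ≥ 0`.
-/

theorem sq_sub_le_abs_sq_sub_sq {R : Type*} [CommRing R] [LinearOrder R] [IsStrictOrderedRing R]
    {a b : R} (ha : 0 ≤ a) (hb : 0 ≤ b) : (a - b) ^ 2 ≤ |a ^ 2 - b ^ 2| := by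
  have hsub : |a - b| ≤ a + b := abs_sub_le_iff.2 ⟨by linarith, by linarith⟩
  calc (a - b) ^ 2 = |a - b| * |a - b| := by rw [abs_mul_abs_self, sq]
    _ ≤ |a - b| * (a + b) := mul_le_mul_of_nonneg_left hsub (abs_nonneg _)
    _ = |a ^ 2 - b ^ 2| := by
      rw [← abs_of_nonneg (add_nonneg ha hb), ← abs_mul]; ring_nf

theorem steady_square_difference_estimate_general (s : ℝ) (μ : ℝ)
    (φ : ℝ → ℝ)
    (hsol : ∀ x : ℝ, -μ * φ x + φ x ^ 2 + convBessel s φ x = 0)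
    (hle : ∀ x : ℝ, φ x ≤ μ / 2) :
    ∀ x y : ℝ, (φ x - φ y) ^ 2 ≤ |convBessel s φ x - convBessel s φ y| := by
  intro x y
  have hdiff : convBessel s φ x - convBessel s φ y =
      (μ / 2 - φ y) ^ 2 - (μ / 2 - φ x) ^ 2 := by
    linear_combination hsol x - hsol y
  calc (φ x - φ y) ^ 2 = ((μ / 2 - φ y) - (μ / 2 - φ x)) ^ 2 := by ring
    _ ≤ |(μ / 2 - φ y) ^ 2 - (μ / 2 - φ x) ^ 2| :=
      sq_sub_le_abs_sq_sub_sq (by linarith [hle y]) (by linarith [hle x])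
    _ = |convBessel s φ x - convBessel s φ y| := by rw [hdiff]

/-- a priori Hölder-type estimate — for a bounded continuous steady solution
with `φ ≤ μ/2`, `(φ(x) - φ(y))² ≤ |(K_s ∗ φ)(x) - (K_s ∗ φ)(y)|`. -/
theorem steady_square_difference_estimate (s : ℝ) (hs : 0 < s) (μ : ℝ)
    (φ : ℝ → ℝ) (hcont : Continuous φ) (hbdd : ∃ M : ℝ, ∀ x : ℝ, |φ x| ≤ M)
    (hsol : ∀ x : ℝ, -μ * φ x + φ x ^ 2 + convBessel s φ x = 0)
    (hle : ∀ x : ℝ, φ x ≤ μ / 2) :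
    ∀ x y : ℝ, (φ x - φ y) ^ 2 ≤ |convBessel s φ x - convBessel s φ y| :=
  steady_square_difference_estimate_general s μ φ hsol hle
end
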